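/- The assignment t(𝕀(s_0; s_1, ..., s_m; s_{m+1})) := Σ_T (T, (s_0, ..., s_{m+1})), the sum over all full binary trees T with m + 1 leaves decorated by the ordered sequence (s_0, s_1, ..., s_{m+1}), extends to a ℚ-algebra homomorphism t : 𝕀̃(S) → 𝒯(S) which is injective, preserves the grading, and intertwines the coproducts: Δ_𝒯 ∘ t = (t ⊗ t) ∘ Δ. Hence t is an injective homomorphism of commutative graded Hopf algebras. -/

import Mathlib

/-!
STATEMENT 8. The assignment `t(𝕀(s₀; s₁, …, s_m; s_{m+1})) := Σ_T (T, (s₀, …, s_{m+1}))`,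
the sum over all plane rooted trivalent trees with `m+1` leaves decorated by
`(s₀, …, s_{m+1})`, extends to an injective, grading-preserving ℚ-algebra homomorphism
`t : 𝕀̃(S) → 𝒯(S)` intertwining the coproducts: an injective homomorphism of commutative
graded Hopf algebras.
-/

open scoped TensorProduct

/-! The Hopf algebra `𝕀̃(S)`. -/

abbrev IGen (S : Type*) := S × {l : List S // l ≠ []} × S

abbrev Itilde (S : Type*) := MvPolynomial (IGen S) ℚ

noncomputable def ISym {S : Type*} (a : S) (l : List S) (b : S) : Itilde S :=
  match l with
  | [] => 1
  | x :: xs => MvPolynomial.X (a, ⟨x :: xs, by simp⟩, b)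

def wdeg {S : Type*} : IGen S → ℕ := fun g => g.2.1.1.length

def marks {α : Type*} : List α → List (List α × List (List α))
  | [] => [([], [[]])]
  | x :: l =>
      ((marks l).map fun p => (x :: p.1, [] :: p.2)) ++
      ((marks l).map fun p => (p.1, (x :: p.2.headI) :: p.2.tail))

def blockProd {S M : Type*} [CommMonoid M] (f : S → List S → S → M) :
    S → List (List S) → List S → S → M
  | _, [], _, _ => 1
  | a, [bl], [], b => f a bl b
  | a, bl :: bls, c :: cs, b => f a bl c * blockProd f c bls cs b
  | _, _ :: _ :: _, [], _ => 1

/-- The coproduct `Δ` of `𝕀̃(S)` (Goncharov's formula on generators). -/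
noncomputable def Delta {S : Type*} : Itilde S →ₐ[ℚ] Itilde S ⊗[ℚ] Itilde S :=
  MvPolynomial.aeval fun g : IGen S =>
    ((marks g.2.1.1).map fun p =>
      ISym g.1 p.1 g.2.2 ⊗ₜ[ℚ] blockProd ISym g.1 p.2 p.1 g.2.2).sum

/-! The Hopf algebra `𝒯(S)` of decorated plane rooted trivalent trees. -/

/-- Full binary trees whose leaves carry the labels of the arcs at their left. -/
inductive DT (S : Type*) : Type _
  | leaf (a : S) : DT S
  | node (l r : DT S) : DT S

def DT.leftLabel {S : Type*} : DT S → S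
  | .leaf a => a
  | .node l _ => l.leftLabel

def DT.internal {S : Type*} : DT S → ℕ
  | .leaf _ => 0
  | .node l r => l.internal + r.internal + 1

abbrev TGen (S : Type*) := {t : DT S × S // ∃ l r, t.1 = DT.node l r}

abbrev TAlg (S : Type*) := MvPolynomial (TGen S) ℚ

noncomputable def TSym {S : Type*} (t : DT S × S) : TAlg S :=
  match t with
  | (.leaf _, _) => 1
  | (.node l r, b) => MvPolynomial.X ⟨(.node l r, b), ⟨l, r, rfl⟩⟩

def wT {S : Type*} : TGen S → ℕ := fun g => g.1.1.internal

def dcuts {S : Type*} : DT S → S → List (DT S × List (DT S × S))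
  | .leaf a, _ => [(.leaf a, [])]
  | .node l r, rb =>
      (.leaf l.leftLabel, [(.node l r, rb)]) ::
      ((dcuts l r.leftLabel).flatMap fun pl =>
        (dcuts r rb).map fun pr => (DT.node pl.1 pr.1, pl.2 ++ pr.2))

/-- The coproduct `Δ_𝒯` of `𝒯(S)` (sum over antichains of internal vertices). -/
noncomputable def DeltaT {S : Type*} : TAlg S →ₐ[ℚ] TAlg S ⊗[ℚ] TAlg S :=
  MvPolynomial.aeval fun g : TGen S =>
    ((dcuts g.1.1 g.1.2).map fun q =>
      TSym (q.1, g.1.2) ⊗ₜ[ℚ] (q.2.map TSym).prod).sum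

/-- All plane binary trees with the given list of leaf labels. -/
def allTrees {S : Type*} : List S → List (DT S)
  | [] => []
  | [a] => [DT.leaf a]
  | a :: b :: l =>
      (List.range (l.length + 1)).attach.flatMap fun k =>
        (allTrees ((a :: b :: l).take (k.1 + 1))).flatMap fun L =>
          (allTrees ((a :: b :: l).drop (k.1 + 1))).map fun R => DT.node L R
  termination_by l => l.length
  decreasing_by
  · have := List.mem_range.mp k.2
    simp only [List.length_take, List.length_drop, List.length_cons]
    omega
  · have := List.mem_range.mp k.2
    simp only [List.length_take, List.length_drop, List.length_cons]
    omega

/-- The homomorphism `t : 𝕀̃(S) → 𝒯(S)`, sending `𝕀(s₀; s₁, …, s_m; s_{m+1})` to the sum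
of all plane rooted trivalent trees decorated by the ordered set `(s₀, …, s_{m+1})`. -/
noncomputable def treeMap {S : Type*} : Itilde S →ₐ[ℚ] TAlg S :=
  MvPolynomial.aeval fun g : IGen S =>
    ((allTrees (g.1 :: g.2.1.1)).map fun T => TSym (T, g.2.2)).sum


/-!
A generator `𝕀(a; l; b)` goes to the sum of all trees with leaf sequence `a :: l`, and every
claim can be checked on generators.

For the coproduct, group the terms of `Δ_𝒯` by their quotient tree `Q`. A cut of `T₁ ∨ T₂`
with quotient `Q₁ ∨ Q₂` is a pair of cuts of `T₁` and `T₂`, so the coefficient of `Q₁ ∨ Q₂`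
is a sum over the splittings of `l` at the first leaf of `Q₂` of products of coefficients;
Goncharov's sum over marked subsequences of `l` satisfies the same splitting identity at any
marked point, and for a one-leaf `Q` both are the sum of all trees on `l`. The grading is
preserved because a tree with `m + 1` leaves has `m` internal vertices. For injectivity, the
algebra map sending the right comb on each leaf sequence to its generator and every other
tree to `0` is a left inverse of `t`, since a tree with a given leaf sequence occurs exactly
once in the image of the corresponding generator.
-/

namespace List

variable {α : Type*}

theorem sum_map_flatMap {β γ M : Type*} [AddCommMonoid M] (l : List β)
    (f : β → List γ) (g : γ → M) :
    ((l.flatMap f).map g).sum = (l.map fun a => ((f a).map g).sum).sum := by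
  induction l <;> simp [*]

theorem Nodup.flatMap {β : Type*} {l : List α} {f : α → List β} (hl : l.Nodup)
    (hf : ∀ x ∈ l, (f x).Nodup) (h : ∀ x ∈ l, ∀ y ∈ l, ∀ z ∈ f x, z ∈ f y → x = y) :
    (l.flatMap f).Nodup :=
  nodup_flatMap.2 ⟨hf, hl.pairwise_of_forall_ne fun x hx y hy hxy z hzx hzy =>
    hxy (h x hx y hy z hzx hzy)⟩

def splits : List α → List (List α × α × List α)
  | [] => []
  | x :: l => ([], x, l) :: (splits l).map fun s => (x :: s.1, s.2.1, s.2.2)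

@[simp] theorem splits_nil : splits ([] : List α) = [] := rfl

@[simp] theorem splits_cons (x : α) (l : List α) :
    splits (x :: l) = ([], x, l) :: (splits l).map fun s => (x :: s.1, s.2.1, s.2.2) := rfl

theorem mem_splits {l : List α} {s : List α × α × List α} :
    s ∈ splits l ↔ s.1 ++ s.2.1 :: s.2.2 = l := by
  obtain ⟨u, c, v⟩ := s
  induction l generalizing u with
  | nil => simp
  | cons x l ih => cases u <;> simp [ih, eq_comm, and_comm]

theorem nodup_splits (l : List α) : (splits l).Nodup := by
  induction l with
  | nil => simp
  | cons x l ih =>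
    refine nodup_cons.2 ⟨by simp, ih.map fun s t h => ?_⟩
    simp only [Prod.mk.injEq, cons.injEq, true_and] at h
    exact Prod.ext h.1 (Prod.ext h.2.1 h.2.2)

theorem flatMap_range_take_drop {β : Type*} (l : List α) (G : List α → List α → List β) :
    (range l.length).flatMap (fun k => G (l.take k) (l.drop k)) =
      l.splits.flatMap fun s => G s.1 (s.2.1 :: s.2.2) := by
  induction l generalizing G with
  | nil => rfl
  | cons x l ih => simp [range_succ_eq_map, flatMap_map, ih fun u v => G (x :: u) v]

end List

theorem Finsupp.list_sum_apply {α ι M : Type*} [AddCommMonoid M] (l : List ι) (g : ι → α →₀ M)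
    (a : α) : (l.map g).sum a = (l.map fun i => g i a).sum := by
  rw [← Finsupp.applyAddHom_apply, map_list_sum, List.map_map]
  rfl

theorem TensorProduct.list_sum_tmul {R M N ι : Type*} [CommSemiring R] [AddCommMonoid M]
    [AddCommMonoid N] [Module R M] [Module R N] (l : List ι) (m : ι → M) (n : N) :
    (l.map m).sum ⊗ₜ[R] n = (l.map fun i => m i ⊗ₜ[R] n).sum := by
  induction l <;> simp [TensorProduct.add_tmul, *]

theorem MvPolynomial.IsWeightedHomogeneous.aeval {σ τ R A M : Type*} [CommSemiring R]
    [CommSemiring A] [Algebra R A] [AddCommMonoid M] {w : σ → M} {w' : τ → M}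
    {φ : MvPolynomial σ R} {n : M} (hφ : φ.IsWeightedHomogeneous w n)
    (g : σ → MvPolynomial τ A) (hg : ∀ i, (g i).IsWeightedHomogeneous w' (w i)) :
    (MvPolynomial.aeval g φ).IsWeightedHomogeneous w' n := by
  rw [φ.as_sum, map_sum]
  refine IsWeightedHomogeneous.sum _ _ _ fun d hd => ?_
  rw [aeval_monomial, ← hφ (mem_support_iff.1 hd), Finsupp.weight_apply,
    MvPolynomial.algebraMap_apply]
  exact (IsWeightedHomogeneous.prod _ _ _ fun i _ => (hg i).pow _).C_mul _

section

variable {S : Type*}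

theorem map_blockProd {M N F : Type*} [CommMonoid M] [CommMonoid N] [FunLike F M N]
    [MonoidHomClass F M N] (φ : F) (f : S → List S → S → M) (a : S) (bls : List (List S))
    (cs : List S) (b : S) :
    φ (blockProd f a bls cs b) = blockProd (fun a l b => φ (f a l b)) a bls cs b := by
  fun_induction blockProd f a bls cs b <;> simp [blockProd, *]

theorem marks_snd_ne_nil {l : List S} {p : List S × List (List S)} (hp : p ∈ marks l) :
    p.2 ≠ [] := by
  cases l <;> simp only [marks, List.mem_singleton, List.mem_append, List.mem_map] at hp <;>
    aesop

section MarkedSum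

variable {R : Type*} [CommSemiring R] [DecidableEq S] (f : S → List S → S → R)

/-- `markedSum f a pre l w b` is the sum, over the occurrences of `w` as a subsequence of `l`,
of the product of `f` over the gaps between consecutive points of `a`, the marked points and
`b`, where the first gap is preceded by `pre`. -/
def markedSum : S → List S → List S → List S → S → R
  | a, pre, [], [], b => f a pre b
  | _, _, [], _ :: _, _ => 0
  | a, pre, x :: l, [], b => markedSum a (pre ++ [x]) l [] b
  | a, pre, x :: l, c :: w, b =>
      (if x = c then f a pre x * markedSum x [] l w b else 0) +
        markedSum a (pre ++ [x]) l (c :: w) b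

theorem markedSum_nil_right (a : S) (pre l : List S) (b : S) :
    markedSum f a pre l [] b = f a (pre ++ l) b := by
  induction l generalizing pre with
  | nil => simp [markedSum]
  | cons x l ih => simp [markedSum, ih]

theorem markedSum_eq_sum_marks (a : S) (pre l w : List S) (b : S) :
    markedSum f a pre l w b = ((marks l).map fun p =>
      if p.1 = w then blockProd f a ((pre ++ p.2.headI) :: p.2.tail) w b else 0).sum := by
  induction l generalizing a pre w with
  | nil => cases w <;> simp [markedSum, marks, blockProd]
  | cons x l ih =>
    cases w with
    | nil => simp [markedSum, marks, ih, Function.comp_def]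
    | cons c w =>
      simp only [markedSum, marks, List.map_append, List.map_map, List.sum_append, ih,
        Function.comp_def, List.cons.injEq, List.headI_cons, List.tail_cons, List.append_nil,
        List.append_assoc, List.cons_append, List.nil_append]
      congr 1
      split_ifs with hxc
      · subst hxc
        rw [← List.sum_map_mul_left]
        refine congrArg List.sum (List.map_congr_left fun p hp => ?_)
        obtain ⟨h, t, ht⟩ := List.exists_cons_of_ne_nil (marks_snd_ne_nil hp)
        by_cases hw : p.1 = w <;> simp [hw, ht, blockProd]
      · simp [hxc]

theorem markedSum_nil_eq_sum_marks (a : S) (l w : List S) (b : S) :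
    markedSum f a [] l w b =
      ((marks l).map fun p => if p.1 = w then blockProd f a p.2 w b else 0).sum := by
  rw [markedSum_eq_sum_marks]
  refine congrArg List.sum (List.map_congr_left fun p hp => ?_)
  obtain ⟨h, t, ht⟩ := List.exists_cons_of_ne_nil (marks_snd_ne_nil hp)
  simp [ht]

theorem sum_splits_markedSum (a : S) (pre l u : List S) (c : S) (v : List S) (b : S) :
    (l.splits.map fun s =>
      if s.2.1 = c then markedSum f a pre s.1 u c * markedSum f c [] s.2.2 v b else 0).sum =
    markedSum f a pre l (u ++ c :: v) b := by
  induction l generalizing a pre u with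
  | nil => cases u <;> simp [markedSum]
  | cons x l ih =>
    cases u with
    | nil =>
      simp only [List.splits_cons, List.map_cons, List.map_map, Function.comp_def, List.sum_cons,
        markedSum, ih, List.nil_append]
      by_cases hxc : x = c <;> simp [hxc]
    | cons d u =>
      have ih' := ih a (pre ++ [x]) (d :: u)
      rw [List.cons_append] at ih'
      simp only [List.splits_cons, List.map_cons, List.map_map, Function.comp_def, List.sum_cons,
        markedSum, List.cons_append, zero_mul, ite_self, zero_add, ← ih', ← ih x [] u]
      by_cases hxd : x = d
      · rw [if_pos hxd, ← List.sum_map_mul_left, ← List.sum_map_add]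
        refine congrArg List.sum (List.map_congr_left fun s _ => ?_)
        split_ifs <;> ring
      · simp [hxd]

end MarkedSum

def DT.leaves : DT S → List S
  | .leaf a => [a]
  | .node l r => l.leaves ++ r.leaves

theorem DT.leaves_eq_cons (T : DT S) : T.leaves = T.leftLabel :: T.leaves.tail := by
  induction T with
  | leaf a => rfl
  | node l r ihl _ => simp only [leaves, leftLabel]; rw [ihl]; simp

theorem DT.leaves_eq_cons_iff {T : DT S} {a : S} {w : List S} :
    T.leaves = a :: w ↔ T.leftLabel = a ∧ T.leaves.tail = w := by
  conv_lhs => rw [T.leaves_eq_cons]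
  exact List.cons_eq_cons

theorem sum_marks_ite_leaves_eq {R : Type*} [CommSemiring R] [DecidableEq S]
    (f : S → List S → S → R) (Q : DT S) (a : S) (l : List S) (b : S) :
    ((marks l).map fun p => if Q.leaves = a :: p.1 then blockProd f a p.2 p.1 b else 0).sum =
      if Q.leftLabel = a then markedSum f a [] l Q.leaves.tail b else 0 := by
  rw [markedSum_nil_eq_sum_marks]
  by_cases hQ : Q.leftLabel = a
  · rw [if_pos hQ]
    refine congrArg List.sum (List.map_congr_left fun p _ => ?_)
    by_cases h : p.1 = Q.leaves.tail
    · simp [h, DT.leaves_eq_cons_iff, hQ]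
    · simp [h, DT.leaves_eq_cons_iff, Ne.symm h]
  · simp [DT.leaves_eq_cons_iff, hQ]

theorem DT.leaves_ne_nil (T : DT S) : T.leaves ≠ [] := by
  rw [T.leaves_eq_cons]; simp

theorem DT.internal_add_one (T : DT S) : T.internal + 1 = T.leaves.length := by
  induction T with
  | leaf a => rfl
  | node l r ihl ihr => simp only [internal, leaves, List.length_append, ← ihl, ← ihr]; ring

theorem allTrees_singleton (a : S) : allTrees [a] = [DT.leaf a] := by simp [allTrees]

theorem allTrees_cons_cons (a x : S) (l : List S) :
    allTrees (a :: x :: l) = (x :: l).splits.flatMap fun s =>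
      (allTrees (a :: s.1)).flatMap fun L => (allTrees (s.2.1 :: s.2.2)).map (DT.node L) := by
  rw [allTrees, ← List.flatMap_range_take_drop (x :: l) fun u v =>
    (allTrees (a :: u)).flatMap fun L => (allTrees v).map (DT.node L)]
  simp

theorem mem_allTrees {T : DT S} {L : List S} : T ∈ allTrees L ↔ T.leaves = L := by
  induction T generalizing L with
  | leaf c =>
    match L with
    | [] => simp [allTrees, DT.leaves]
    | [a] => simp [allTrees_singleton, DT.leaves]
    | a :: x :: l => simp [allTrees_cons_cons, DT.leaves]
  | node Tl Tr ihl ihr =>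
    match L with
    | [] => simp [allTrees, DT.leaves, Tl.leaves_ne_nil]
    | [a] =>
      simp only [allTrees_singleton, List.mem_singleton, reduceCtorEq, false_iff, DT.leaves]
      rw [Tl.leaves_eq_cons, Tr.leaves_eq_cons]
      simp
    | a :: x :: l =>
      simp only [allTrees_cons_cons, List.mem_flatMap, List.mem_map, List.mem_splits,
        DT.node.injEq, DT.leaves]
      constructor
      · rintro ⟨s, hs, _, hl, _, hr, rfl, rfl⟩
        rw [ihl.1 hl, ihr.1 hr, List.cons_append, hs]
      · intro h
        rw [Tl.leaves_eq_cons, Tr.leaves_eq_cons, List.cons_append, List.cons.injEq] at h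
        refine ⟨(Tl.leaves.tail, Tr.leftLabel, Tr.leaves.tail), h.2, Tl, ihl.2 ?_, Tr,
          ihr.2 Tr.leaves_eq_cons, rfl, rfl⟩
        conv_lhs => rw [Tl.leaves_eq_cons, h.1]

theorem nodup_allTrees (L : List S) : (allTrees L).Nodup := by
  induction hL : L.length using Nat.strong_induction_on generalizing L with
  | _ n ih =>
    match L with
    | [] => simp [allTrees]
    | [a] => simp [allTrees_singleton]
    | a :: x :: l =>
      subst hL
      have hlt : ∀ s ∈ (x :: l).splits, s.1.length < l.length + 1 ∧
          s.2.2.length < l.length + 1 := by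
        intro s hs
        have := congrArg List.length (List.mem_splits.1 hs)
        simp only [List.length_append, List.length_cons] at this
        omega
      rw [allTrees_cons_cons]
      refine (List.nodup_splits _).flatMap (fun s hs => ?_) ?_
      · obtain ⟨h1, h2⟩ := hlt s hs
        refine (ih _ (by simpa using h1) _ rfl).flatMap
          (fun L _ => (ih _ (by simpa using h2) _ rfl).map fun _ _ h => by injection h) ?_
        simp only [List.mem_map]
        rintro _ _ _ _ _ ⟨_, _, rfl⟩ ⟨_, _, h⟩
        injection h with h
        exact h.symm
      · simp only [List.mem_flatMap, List.mem_map, List.mem_splits, mem_allTrees]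
        rintro ⟨u, c, v⟩ - ⟨u', c', v'⟩ - _ ⟨_, hl, _, hr, rfl⟩ ⟨_, hl', _, hr', h⟩
        injection h with h₁ h₂
        subst h₁ h₂
        simp_all

theorem leftLabel_of_mem_allTrees {T : DT S} {a : S} {l : List S} (h : T ∈ allTrees (a :: l)) :
    T.leftLabel = a :=
  (DT.leaves_eq_cons_iff.1 (mem_allTrees.1 h)).1

noncomputable def treeSum (a : S) (l : List S) (b : S) : TAlg S :=
  ((allTrees (a :: l)).map fun T => TSym (T, b)).sum

theorem treeSum_nil (a b : S) : treeSum a [] b = 1 := by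
  simp [treeSum, allTrees_singleton, TSym]

theorem treeMap_X (g : IGen S) : treeMap (MvPolynomial.X g) = treeSum g.1 g.2.1.1 g.2.2 := by
  simp [treeMap, treeSum]

theorem treeMap_ISym (a : S) (l : List S) (b : S) : treeMap (ISym a l b) = treeSum a l b := by
  cases l with
  | nil => simp [ISym, treeSum_nil]
  | cons x l => exact treeMap_X _

section Cuts

open Classical

theorem sum_allTrees_ite_eq {M : Type*} [AddCommMonoid M] (L : List S) (Q : DT S) (x : M) :
    ((allTrees L).map fun T => if T = Q then x else 0).sum = if Q.leaves = L then x else 0 := by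
  rw [← List.sum_toFinset _ (nodup_allTrees L), Finset.sum_ite_eq']
  simp [mem_allTrees]

/-- The coefficient of `TSym (Q, b) ⊗ -` in `DeltaT (TSym (T, b))`. -/
noncomputable def cutCoeff (T : DT S) (b : S) (Q : DT S) : TAlg S :=
  ((dcuts T b).map fun q => if q.1 = Q then (q.2.map TSym).prod else 0).sum

theorem cutCoeff_leaf (T : DT S) (b c : S) :
    cutCoeff T b (.leaf c) = if T.leftLabel = c then TSym (T, b) else 0 := by
  cases T with
  | leaf a => by_cases h : a = c <;> simp [cutCoeff, dcuts, DT.leftLabel, TSym, h]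
  | node l r =>
    by_cases h : l.leftLabel = c <;>
      simp [cutCoeff, dcuts, DT.leftLabel, TSym, List.sum_map_flatMap, Function.comp_def, h]

theorem cutCoeff_leaf_node (a b : S) (Ql Qr : DT S) : cutCoeff (.leaf a) b (.node Ql Qr) = 0 := by
  simp [cutCoeff, dcuts]

theorem cutCoeff_node_node (Tl Tr : DT S) (b : S) (Ql Qr : DT S) :
    cutCoeff (.node Tl Tr) b (.node Ql Qr) = cutCoeff Tl Tr.leftLabel Ql * cutCoeff Tr b Qr := by
  simp only [cutCoeff, dcuts, List.map_cons, List.sum_cons, reduceCtorEq, if_false, zero_add,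
    List.sum_map_flatMap, List.map_map]
  rw [← List.sum_map_mul_right]
  refine congrArg List.sum (List.map_congr_left fun pl _ => ?_)
  rw [← List.sum_map_mul_left]
  refine congrArg List.sum (List.map_congr_left fun pr _ => ?_)
  simp only [Function.comp, DT.node.injEq, List.map_append, List.prod_append]
  split_ifs <;> simp_all

noncomputable def cutSum (L : List S) (b : S) (Q : DT S) : TAlg S :=
  ((allTrees L).map fun T => cutCoeff T b Q).sum

theorem cutSum_leaf (a : S) (l : List S) (b c : S) :
    cutSum (a :: l) b (.leaf c) = if c = a then treeSum a l b else 0 := by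
  rw [cutSum, List.map_congr_left fun T hT => by rw [cutCoeff_leaf, leftLabel_of_mem_allTrees hT]]
  by_cases h : c = a
  · simp [h, treeSum]
  · simp [h, Ne.symm h]

theorem cutSum_node (a : S) (l : List S) (b : S) (Ql Qr : DT S) :
    cutSum (a :: l) b (.node Ql Qr) =
      (l.splits.map fun s => cutSum (a :: s.1) s.2.1 Ql * cutSum (s.2.1 :: s.2.2) b Qr).sum := by
  cases l with
  | nil => simp [cutSum, allTrees_singleton, cutCoeff_leaf_node]
  | cons x l =>
    rw [cutSum, allTrees_cons_cons, List.sum_map_flatMap]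
    refine congrArg List.sum (List.map_congr_left fun s _ => ?_)
    rw [List.sum_map_flatMap, cutSum, cutSum, ← List.sum_map_mul_right]
    refine congrArg List.sum (List.map_congr_left fun Tl _ => ?_)
    rw [List.map_map, ← List.sum_map_mul_left]
    refine congrArg List.sum (List.map_congr_left fun Tr hTr => ?_)
    simp [cutCoeff_node_node, leftLabel_of_mem_allTrees hTr]

theorem cutSum_eq_markedSum (Q : DT S) (a : S) (l : List S) (b : S) :
    cutSum (a :: l) b Q =
      if Q.leftLabel = a then markedSum treeSum a [] l Q.leaves.tail b else 0 := by
  induction Q generalizing a l b with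
  | leaf c => simp [cutSum_leaf, DT.leftLabel, DT.leaves, markedSum_nil_right]
  | node Ql Qr ihl ihr =>
    have hleaves :
        (DT.node Ql Qr).leaves.tail = Ql.leaves.tail ++ Qr.leftLabel :: Qr.leaves.tail := by
      rw [DT.leaves, Ql.leaves_eq_cons, ← Qr.leaves_eq_cons]; rfl
    rw [cutSum_node, hleaves, ← sum_splits_markedSum, DT.leftLabel]
    by_cases hA : Ql.leftLabel = a
    · simp only [hA, if_true]
      refine congrArg List.sum (List.map_congr_left fun s _ => ?_)
      by_cases hB : s.2.1 = Qr.leftLabel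
      · simp [ihl, ihr, hA, hB]
      · simp [ihl, ihr, hA, hB, Ne.symm hB]
    · simp [ihl, hA]

end Cuts

theorem deltaT_TSym (T : DT S) (b : S) :
    DeltaT (TSym (T, b)) =
      ((dcuts T b).map fun q => TSym (q.1, b) ⊗ₜ[ℚ] (q.2.map TSym).prod).sum := by
  cases T with
  | leaf a => simp [TSym, dcuts, Algebra.TensorProduct.one_def]
  | node l r => simp [TSym, DeltaT]

open Classical in
theorem deltaT_treeSum (a : S) (l : List S) (b : S) :
    DeltaT (treeSum a l b) =
      ((marks l).map fun p => treeSum a p.1 b ⊗ₜ[ℚ] blockProd treeSum a p.2 p.1 b).sum := by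
  -- Compare the two sides coefficientwise in `TSym (Q, b) ⊗ -`.
  let Φ : (DT S →₀ TAlg S) →+ TAlg S ⊗[ℚ] TAlg S := Finsupp.liftAddHom fun Q =>
    (TensorProduct.mk ℚ (TAlg S) (TAlg S) (TSym (Q, b))).toAddMonoidHom
  have hΦ (Q : DT S) (x : TAlg S) : Φ (Finsupp.single Q x) = TSym (Q, b) ⊗ₜ x :=
    Finsupp.liftAddHom_apply_single _ _ _
  have hcuts : DeltaT (treeSum a l b) = Φ ((allTrees (a :: l)).map fun T =>
      ((dcuts T b).map fun q => Finsupp.single q.1 (q.2.map TSym).prod).sum).sum := by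
    simp [treeSum, map_list_sum, hΦ, deltaT_TSym, List.map_map, Function.comp_def]
  have hmarks : ((marks l).map fun p => treeSum a p.1 b ⊗ₜ[ℚ] blockProd treeSum a p.2 p.1 b).sum =
      Φ ((marks l).map fun p => ((allTrees (a :: p.1)).map fun Q =>
        Finsupp.single Q (blockProd treeSum a p.2 p.1 b)).sum).sum := by
    simp [treeSum, map_list_sum, hΦ, TensorProduct.list_sum_tmul, List.map_map, Function.comp_def]
  rw [hcuts, hmarks]
  congr 1
  refine Finsupp.ext fun Q => ?_
  simp only [Finsupp.list_sum_apply, Finsupp.single_apply, sum_allTrees_ite_eq]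
  exact (cutSum_eq_markedSum Q a l b).trans (sum_marks_ite_leaves_eq _ Q a l b).symm

theorem deltaT_comp_treeMap :
    DeltaT.comp (treeMap (S := S)) =
      (Algebra.TensorProduct.map treeMap treeMap).comp (Delta (S := S)) := by
  refine MvPolynomial.algHom_ext fun g => ?_
  simp [treeMap_X, deltaT_treeSum, Delta, map_list_sum, Function.comp_def, map_blockProd,
    treeMap_ISym]

theorem isWeightedHomogeneous_TSym (T : DT S) (b : S) :
    (TSym (T, b)).IsWeightedHomogeneous wT T.internal := by
  cases T with
  | leaf a => exact MvPolynomial.isWeightedHomogeneous_one ℚ wT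
  | node l r => exact MvPolynomial.isWeightedHomogeneous_X ℚ wT _

theorem isWeightedHomogeneous_treeSum (a : S) (l : List S) (b : S) :
    (treeSum a l b).IsWeightedHomogeneous wT l.length := by
  rw [← MvPolynomial.mem_weightedHomogeneousSubmodule]
  refine list_sum_mem ?_
  simp only [List.mem_map]
  rintro _ ⟨T, hT, rfl⟩
  have h := T.internal_add_one
  rw [mem_allTrees.1 hT, List.length_cons, Nat.add_right_cancel_iff] at h
  exact h ▸ isWeightedHomogeneous_TSym T b

theorem treeMap_mem_weightedHomogeneousSubmodule {n : ℕ} {x : Itilde S}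
    (hx : x ∈ MvPolynomial.weightedHomogeneousSubmodule ℚ wdeg n) :
    treeMap x ∈ MvPolynomial.weightedHomogeneousSubmodule ℚ wT n :=
  MvPolynomial.IsWeightedHomogeneous.aeval hx _ fun _ => isWeightedHomogeneous_treeSum _ _ _

def rightComb (a : S) : List S → DT S
  | [] => .leaf a
  | x :: l => .node (.leaf a) (rightComb x l)

theorem leaves_rightComb (a : S) (l : List S) : (rightComb a l).leaves = a :: l := by
  induction l generalizing a <;> simp [rightComb, DT.leaves, *]

section Retraction

open Classical

noncomputable def combCoeff (T : DT S) (b : S) : Itilde S :=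
  if T = rightComb T.leftLabel T.leaves.tail then ISym T.leftLabel T.leaves.tail b else 0

noncomputable def combRetraction : TAlg S →ₐ[ℚ] Itilde S :=
  MvPolynomial.aeval fun g => combCoeff g.1.1 g.1.2

theorem combRetraction_TSym (T : DT S) (b : S) : combRetraction (TSym (T, b)) = combCoeff T b := by
  cases T with
  | leaf a => simp [TSym, combCoeff, rightComb, DT.leaves, DT.leftLabel, ISym]
  | node l r => simp [TSym, combRetraction]

theorem combRetraction_comp_treeMap :
    combRetraction.comp (treeMap (S := S)) = AlgHom.id ℚ (Itilde S) := by
  refine MvPolynomial.algHom_ext fun ⟨a, ⟨l, hl⟩, b⟩ => ?_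
  have hcoeff : ∀ T ∈ allTrees (a :: l),
      combRetraction (TSym (T, b)) = if T = rightComb a l then ISym a l b else 0 := by
    intro T hT
    obtain ⟨h₁, h₂⟩ := DT.leaves_eq_cons_iff.1 (mem_allTrees.1 hT)
    rw [combRetraction_TSym, combCoeff, h₁, h₂]
  rw [AlgHom.comp_apply, treeMap_X, treeSum, map_list_sum, List.map_map, Function.comp_def,
    List.map_congr_left hcoeff, sum_allTrees_ite_eq, if_pos (leaves_rightComb a l)]
  obtain ⟨x, l, rfl⟩ := List.exists_cons_of_ne_nil hl
  rfl

end Retraction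

theorem treeMap_injective : Function.Injective (treeMap (S := S)) :=
  Function.LeftInverse.injective (g := combRetraction)
    (AlgHom.congr_fun combRetraction_comp_treeMap)

end

theorem treeMap_injective_graded_Hopf_hom (S : Type*) :
    -- t is injective
    Function.Injective (treeMap (S := S)) ∧
    -- t preserves the grading
    (∀ (n : ℕ) (x : Itilde S), x ∈ MvPolynomial.weightedHomogeneousSubmodule ℚ wdeg n →
      treeMap x ∈ MvPolynomial.weightedHomogeneousSubmodule ℚ wT n) ∧
    -- t intertwines the coproducts: Δ_𝒯 ∘ t = (t ⊗ t) ∘ Δ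
    (∀ x : Itilde S,
      DeltaT (treeMap x) =
        (Algebra.TensorProduct.map (treeMap (S := S)) (treeMap (S := S))) (Delta x)) :=
  ⟨treeMap_injective, fun _ _ => treeMap_mem_weightedHomogeneousSubmodule,
    AlgHom.congr_fun deltaT_comp_treeMap⟩
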